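/- arXiv:1202.0580 — 4 statements merged into one kernel-verified Lean document; each statement's English description precedes it below -/
import Mathlib

section
/- Suppose A and B are hyperbolic matrices in SL(2,ℝ) with ‖A‖ = λ₁^m and ‖B‖ = λ₂^n for some m, n > 0 and λ₁, λ₂ > 1. If A maps the most contracted direction s(A) of A to a vector parallel to the most expanded direction u(B) of B, then ‖BA‖ ≤ 2·max{λ₁^m·λ₂^{-n}, λ₂^n·λ₁^{-m}}. -/
/-!
The area form `cross x y = det [x y]` on `ℝ²` is invariant under `SL(2,ℝ)` and satisfies
`⟪x, y⟫² + cross x y² = ‖x‖² ‖y‖²`. Hence for a unit vector `x` and its quarter turn `rot x`,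
`‖M x‖ ‖M (rot x)‖ ≥ 1` with equality exactly when `M x ⊥ M (rot x)`. For `x = s(A)` this forces
`‖A (rot s(A))‖ = ‖A‖` and `A (rot s(A)) ⊥ A s(A) ∥ u(B)`. On the other side, a norming vector
`u(B)` is an eigenvector of `Bᵀ B`, so `B` maps `u(B)^⊥` orthogonally to `B u(B)` and therefore
contracts it by exactly `‖B‖⁻¹`. Thus `BA` stretches `s(A)` by `‖B‖/‖A‖` and `rot s(A)` by
`‖A‖/‖B‖`, and `‖BA‖` is at most the sum of the two.
-/

noncomputable def act (A : Matrix (Fin 2) (Fin 2) ℝ) :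
    EuclideanSpace ℝ (Fin 2) →L[ℝ] EuclideanSpace ℝ (Fin 2) :=
  Matrix.toEuclideanCLM (𝕜 := ℝ) A

open scoped InnerProductSpace

/-- `u` maximizes the Rayleigh quotient of `T† T` on its sphere, hence is an eigenvector of `T† T`,
and `⟪T u, T v⟫ = ⟪T† T u, v⟫`. -/
theorem ContinuousLinearMap.inner_map_map_eq_zero_of_norm_map_eq
    {E F : Type*} [NormedAddCommGroup E] [InnerProductSpace ℝ E] [CompleteSpace E]
    [NormedAddCommGroup F] [InnerProductSpace ℝ F] [CompleteSpace F]
    (T : E →L[ℝ] F) {u v : E} (hu : ‖T u‖ = ‖T‖ * ‖u‖) (huv : ⟪u, v⟫_ℝ = 0) :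
    ⟪T u, T v⟫_ℝ = 0 := by
  have hmax : IsMaxOn (adjoint T ∘L T).reApplyInnerSelf (Metric.sphere 0 ‖u‖) u := by
    intro x hx
    rw [mem_sphere_zero_iff_norm] at hx
    simp only [Set.mem_ofPred_eq, reApplyInnerSelf_apply, ← apply_norm_sq_eq_inner_adjoint_left]
    gcongr
    exact hu ▸ hx ▸ T.le_opNorm x
  have heig := (isPositive_adjoint_comp_self T).isSelfAdjoint.eq_smul_self_of_isLocalExtrOn_real
    (Or.inr hmax.localize)
  rw [← adjoint_inner_left, ← comp_apply, heig, real_inner_smul_left, huv, mul_zero]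

local notation "ℝ²" => EuclideanSpace ℝ (Fin 2)

def cross (x y : ℝ²) : ℝ := x 0 * y 1 - x 1 * y 0

def rot (x : ℝ²) : ℝ² := !₂[-x 1, x 0]

lemma act_apply (M : Matrix (Fin 2) (Fin 2) ℝ) (x : ℝ²) (i : Fin 2) :
    act M x i = M i 0 * x 0 + M i 1 * x 1 := by
  change (M.mulVec x.ofLp) i = _
  simp [Matrix.mulVec, dotProduct, Fin.sum_univ_two]

lemma act_mul (A B : Matrix (Fin 2) (Fin 2) ℝ) : act (B * A) = act B ∘L act A :=
  map_mul _ B A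

lemma norm_sq_eq_fin_two (x : ℝ²) : ‖x‖ ^ 2 = x 0 ^ 2 + x 1 ^ 2 := by
  simp [EuclideanSpace.norm_sq_eq, Fin.sum_univ_two]

lemma inner_eq_fin_two (x y : ℝ²) : ⟪x, y⟫_ℝ = x 0 * y 0 + x 1 * y 1 := by
  simp [PiLp.inner_apply, Fin.sum_univ_two, mul_comm]

lemma inner_sq_add_cross_sq (x y : ℝ²) : ⟪x, y⟫_ℝ ^ 2 + cross x y ^ 2 = ‖x‖ ^ 2 * ‖y‖ ^ 2 := by
  rw [inner_eq_fin_two, norm_sq_eq_fin_two, norm_sq_eq_fin_two, cross]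
  ring

lemma cross_act (M : Matrix (Fin 2) (Fin 2) ℝ) (x y : ℝ²) :
    cross (act M x) (act M y) = M.det * cross x y := by
  simp only [cross, act_apply, Matrix.det_fin_two]
  ring

lemma norm_rot (x : ℝ²) : ‖rot x‖ = ‖x‖ := by
  rw [← sq_eq_sq₀ (norm_nonneg _) (norm_nonneg _), norm_sq_eq_fin_two, norm_sq_eq_fin_two]
  simp [rot]
  ring

lemma cross_rot (x : ℝ²) : cross x (rot x) = ‖x‖ ^ 2 := by
  simp [cross, rot, norm_sq_eq_fin_two]
  ring

lemma eq_inner_smul_add_inner_rot_smul {x : ℝ²} (hx : ‖x‖ = 1) (v : ℝ²) :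
    v = ⟪x, v⟫_ℝ • x + ⟪rot x, v⟫_ℝ • rot x := by
  have h : x 0 ^ 2 + x 1 ^ 2 = 1 := by rw [← norm_sq_eq_fin_two, hx, one_pow]
  ext i
  fin_cases i <;> simp [inner_eq_fin_two, rot] <;> linear_combination (-v _) * h

lemma abs_cross_le (x y : ℝ²) : |cross x y| ≤ ‖x‖ * ‖y‖ := by
  rw [← sq_le_sq₀ (abs_nonneg _) (by positivity), sq_abs, mul_pow, ← inner_sq_add_cross_sq]
  nlinarith [sq_nonneg ⟪x, y⟫_ℝ]

lemma inner_eq_zero_of_abs_cross_eq {x y : ℝ²} (h : |cross x y| = ‖x‖ * ‖y‖) : ⟪x, y⟫_ℝ = 0 := by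
  have := inner_sq_add_cross_sq x y
  rw [← sq_abs (cross x y), h, mul_pow] at this
  exact pow_eq_zero_iff two_ne_zero |>.mp (by linarith)

lemma abs_cross_eq_of_inner_eq_zero {x y : ℝ²} (h : ⟪x, y⟫_ℝ = 0) : |cross x y| = ‖x‖ * ‖y‖ := by
  have := inner_sq_add_cross_sq x y
  rw [h, zero_pow two_ne_zero, zero_add, ← sq_abs, ← mul_pow] at this
  exact (sq_eq_sq₀ (abs_nonneg _) (by positivity)).mp this

lemma opNorm_le_norm_apply_add_norm_apply_rot {F : Type*} [SeminormedAddCommGroup F]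
    [NormedSpace ℝ F] (T : ℝ² →L[ℝ] F) {x : ℝ²} (hx : ‖x‖ = 1) :
    ‖T‖ ≤ ‖T x‖ + ‖T (rot x)‖ := by
  refine T.opNorm_le_bound (by positivity) fun v => ?_
  have hxv : |⟪x, v⟫_ℝ| ≤ ‖v‖ := by simpa [hx] using abs_real_inner_le_norm x v
  have hrv : |⟪rot x, v⟫_ℝ| ≤ ‖v‖ := by simpa [norm_rot, hx] using abs_real_inner_le_norm (rot x) v
  calc ‖T v‖ = ‖⟪x, v⟫_ℝ • T x + ⟪rot x, v⟫_ℝ • T (rot x)‖ := by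
        rw [← map_smul, ← map_smul, ← map_add, ← eq_inner_smul_add_inner_rot_smul hx]
    _ ≤ |⟪x, v⟫_ℝ| * ‖T x‖ + |⟪rot x, v⟫_ℝ| * ‖T (rot x)‖ := by
        exact (norm_add_le _ _).trans_eq (by simp only [norm_smul, Real.norm_eq_abs])
    _ ≤ ‖v‖ * ‖T x‖ + ‖v‖ * ‖T (rot x)‖ := by gcongr
    _ = (‖T x‖ + ‖T (rot x)‖) * ‖v‖ := by ring

lemma opNorm_act_pos {M : Matrix (Fin 2) (Fin 2) ℝ} (hM : M.det ≠ 0) : 0 < ‖act M‖ := by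
  refine norm_pos_iff.mpr fun h => hM ?_
  rw [act, EmbeddingLike.map_eq_zero_iff] at h
  simp [h]

section SL2

variable {M : Matrix (Fin 2) (Fin 2) ℝ} (hM : M.det = 1)
include hM

lemma norm_act_rot_eq_opNorm {s : ℝ²} (hs : ‖s‖ = 1) (hMs : ‖act M s‖ = ‖act M‖⁻¹) :
    ‖act M (rot s)‖ = ‖act M‖ := by
  refine le_antisymm (by simpa [norm_rot, hs] using (act M).le_opNorm (rot s)) ?_
  have h := abs_cross_le (act M s) (act M (rot s))
  rw [cross_act, hM, cross_rot, hs, hMs] at h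
  norm_num at h
  rwa [inv_mul_eq_div, one_le_div (opNorm_act_pos (by simp [hM]))] at h

lemma inner_act_act_rot_eq_zero {s : ℝ²} (hs : ‖s‖ = 1) (hMs : ‖act M s‖ = ‖act M‖⁻¹) :
    ⟪act M s, act M (rot s)⟫_ℝ = 0 := by
  refine inner_eq_zero_of_abs_cross_eq ?_
  rw [cross_act, hM, cross_rot, hs, hMs, norm_act_rot_eq_opNorm hM hs hMs,
    inv_mul_cancel₀ (opNorm_act_pos (by simp [hM])).ne']
  norm_num

lemma opNorm_mul_norm_act_of_inner_eq_zero {u v : ℝ²} (hu : ‖u‖ = 1)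
    (hMu : ‖act M u‖ = ‖act M‖) (huv : ⟪u, v⟫_ℝ = 0) : ‖act M‖ * ‖act M v‖ = ‖v‖ := by
  have horth := (act M).inner_map_map_eq_zero_of_norm_map_eq (by rw [hMu, hu, mul_one]) huv
  calc ‖act M‖ * ‖act M v‖ = |cross (act M u) (act M v)| := by
        rw [abs_cross_eq_of_inner_eq_zero horth, hMu]
    _ = |cross u v| := by rw [cross_act, hM, one_mul]
    _ = ‖v‖ := by rw [abs_cross_eq_of_inner_eq_zero huv, hu, one_mul]

end SL2

theorem stmt2_general (A B : Matrix (Fin 2) (Fin 2) ℝ)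
    (hdetA : A.det = 1) (hdetB : B.det = 1)
    (l₁ l₂ m n : ℝ) (hl₁ : 1 < l₁) (hl₂ : 1 < l₂)
    (hA : ‖act A‖ = l₁ ^ m) (hB : ‖act B‖ = l₂ ^ n)
    (sA uB : EuclideanSpace ℝ (Fin 2))
    (hsA : ‖sA‖ = 1) (hsA' : ‖act A sA‖ = ‖act A‖⁻¹)
    (huB : ‖uB‖ = 1) (huB' : ‖act B uB‖ = ‖act B‖)
    (hpar : ∃ c : ℝ, act A sA = c • uB) :
    ‖act (B * A)‖ ≤ 2 * max (l₁ ^ m * l₂ ^ (-n)) (l₂ ^ n * l₁ ^ (-m)) := by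
  obtain ⟨c, hc⟩ := hpar
  have hApos := opNorm_act_pos (M := A) (by simp [hdetA])
  have hBpos := opNorm_act_pos (M := B) (by simp [hdetB])
  have habs : |c| = ‖act A‖⁻¹ := by rw [← hsA', hc, norm_smul, huB, Real.norm_eq_abs, mul_one]
  have huBz : ⟪uB, act A (rot sA)⟫_ℝ = 0 := by
    have h := inner_act_act_rot_eq_zero hdetA hsA hsA'
    rw [hc, real_inner_smul_left] at h
    exact (mul_eq_zero.mp h).resolve_left fun hc0 => by
      rw [hc0, abs_zero] at habs
      exact (inv_pos.mpr hApos).ne' habs.symm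
  have hBz : ‖act B (act A (rot sA))‖ = ‖act A‖ / ‖act B‖ := by
    rw [eq_div_iff hBpos.ne', mul_comm, opNorm_mul_norm_act_of_inner_eq_zero hdetB huB huB' huBz,
      norm_act_rot_eq_opNorm hdetA hsA hsA']
  have hbound : ‖act (B * A)‖ ≤ ‖act B‖ / ‖act A‖ + ‖act A‖ / ‖act B‖ := by
    refine (opNorm_le_norm_apply_add_norm_apply_rot _ hsA).trans_eq ?_
    rw [act_mul, ContinuousLinearMap.comp_apply, ContinuousLinearMap.comp_apply, hc, map_smul,
      norm_smul, Real.norm_eq_abs, habs, huB', hBz]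
    ring
  rw [Real.rpow_neg (by linarith), Real.rpow_neg (by linarith), ← hA, ← hB, ← div_eq_mul_inv,
    ← div_eq_mul_inv]
  linarith [le_max_left (‖act A‖ / ‖act B‖) (‖act B‖ / ‖act A‖),
    le_max_right (‖act A‖ / ‖act B‖) (‖act B‖ / ‖act A‖)]

/-- If `A, B ∈ SL(2,ℝ)` are hyperbolic with `‖A‖ = λ₁^m`, `‖B‖ = λ₂^n` (`m, n > 0`,
`λ₁, λ₂ > 1`) and `A` maps its most contracted direction `s(A)` to a vector parallel
to the most expanded direction `u(B)` of `B`, then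
`‖BA‖ ≤ 2·max (λ₁^m·λ₂^{-n}) (λ₂^n·λ₁^{-m})`. -/
theorem stmt2 (A B : Matrix (Fin 2) (Fin 2) ℝ)
    (hdetA : A.det = 1) (hdetB : B.det = 1)
    (l₁ l₂ m n : ℝ) (hl₁ : 1 < l₁) (hl₂ : 1 < l₂) (hm : 0 < m) (hn : 0 < n)
    (hA : ‖act A‖ = l₁ ^ m) (hB : ‖act B‖ = l₂ ^ n)
    (sA uB : EuclideanSpace ℝ (Fin 2))
    (hsA : ‖sA‖ = 1) (hsA' : ‖act A sA‖ = ‖act A‖⁻¹)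
    (huB : ‖uB‖ = 1) (huB' : ‖act B uB‖ = ‖act B‖)
    (hpar : ∃ c : ℝ, act A sA = c • uB) :
    ‖act (B * A)‖ ≤ 2 * max (l₁ ^ m * l₂ ^ (-n)) (l₂ ^ n * l₁ ^ (-m)) :=
  stmt2_general A B hdetA hdetB l₁ l₂ m n hl₁ hl₂ hA hB sA uB hsA hsA' huB huB' hpar
end

section
/- Let λ > 1 and f(λ, θ) = λ²/(sin²θ + λ⁴cos²θ). Then for every i ≥ 1 and all θ, the i-th partial derivative of f with respect to θ satisfies |∂_θ^i f(λ, θ)| ≤ 4^i · (i!)² · λ^{2i} · |f(λ, θ)|. -/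
/-!
Write `D θ = sin² θ + λ⁴ cos² θ`, so that `D f = λ²` and `D ≥ 1`. Since
`D θ = (1 + λ⁴)/2 + (λ⁴ - 1)/2 · cos 2θ`, every derivative of `D` is explicit, and
`|D^(k+1)| ≤ 2^k λ^(2k+2) D` (for `k = 0` by AM-GM). Differentiating `D f = λ²` with Leibniz'
rule expresses `D f^(n)` through the lower derivatives of `f`, and strong induction on `n`
closes because the binomial coefficients are dominated by the factorials: the `k`-th term of
the Leibniz sum is at most `2^-(k+1)` times the claimed bound.
-/

open Real Finset
open scoped Nat ContDiff

noncomputable def f (lam θ : ℝ) : ℝ :=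
  lam ^ 2 / (Real.sin θ ^ 2 + lam ^ 4 * Real.cos θ ^ 2)

theorem Nat.choose_mul_factorial_sub_sq_le (n j : ℕ) : n.choose j * (n - j)! ^ 2 ≤ n ! ^ 2 := by
  rcases le_or_gt j n with hjn | hnj
  · have hchoose : n.choose j * (n - j)! ≤ n ! := by
      calc n.choose j * (n - j)! ≤ n.choose j * j ! * (n - j)! := by
            gcongr; exact Nat.le_mul_of_pos_right _ (factorial_pos j)
        _ = n ! := choose_mul_factorial_mul_factorial hjn
    calc n.choose j * (n - j)! ^ 2 = n.choose j * (n - j)! * (n - j)! := by ring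
      _ ≤ n ! * n ! := Nat.mul_le_mul hchoose (factorial_le (Nat.sub_le n j))
      _ = n ! ^ 2 := (sq _).symm
  · simp [choose_eq_zero_of_lt hnj]

theorem choose_mul_four_pow_mul_factorial_sq_le {a : ℝ} (ha : 0 ≤ a) {m k : ℕ}
    (hkm : k ≤ m) :
    (m + 1).choose (k + 1) * (2 ^ k * a ^ (k + 1))
        * (4 ^ (m - k) * ((m - k)! : ℝ) ^ 2 * a ^ (m - k))
      ≤ (1 / 2) ^ (k + 1) * (4 ^ (m + 1) * ((m + 1)! : ℝ) ^ 2 * a ^ (m + 1)) := by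
  have hfact : ((m + 1).choose (k + 1) : ℝ) * ((m - k)! : ℝ) ^ 2 ≤ ((m + 1)! : ℝ) ^ 2 := by
    have := (m + 1).choose_mul_factorial_sub_sq_le (k + 1)
    rw [Nat.add_sub_add_right] at this
    exact_mod_cast this
  have hpow2 : (2 : ℝ) ^ k * 4 ^ (m - k) * 2 ^ (k + 1) = 2 * 4 ^ m := by
    rw [show (4 : ℝ) = 2 ^ 2 by norm_num, ← pow_mul, ← pow_mul, ← pow_add, ← pow_add,
      ← pow_succ']
    congr 1; omega
  have hpowa : a ^ (k + 1) * a ^ (m - k) = a ^ (m + 1) := by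
    rw [← pow_add]; congr 1; omega
  calc _ = ((m + 1).choose (k + 1) * ((m - k)! : ℝ) ^ 2) * (2 ^ k * 4 ^ (m - k) * 2 ^ (k + 1))
          * a ^ (m + 1) * (1 / 2) ^ (k + 1) := by
        rw [← hpowa, one_div_pow]; field_simp
    _ ≤ ((m + 1)! : ℝ) ^ 2 * (4 ^ (m + 1)) * a ^ (m + 1) * (1 / 2) ^ (k + 1) := by
        rw [hpow2]; gcongr; rw [pow_succ]; linarith [pow_nonneg (by norm_num : (0:ℝ) ≤ 4) m]
    _ = _ := by ring

theorem mul_iteratedDeriv_succ_of_mul_eq_const {𝕜 : Type*} [NontriviallyNormedField 𝕜]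
    {D g : 𝕜 → 𝕜} {c x : 𝕜} {n : ℕ} (hD : ContDiffAt 𝕜 (n + 1) D x)
    (hg : ContDiffAt 𝕜 (n + 1) g x) (hDg : ∀ y, D y * g y = c) :
    D x * iteratedDeriv (n + 1) g x = -∑ k ∈ range (n + 1),
      (n + 1).choose (k + 1) * iteratedDeriv (k + 1) D x * iteratedDeriv (n - k) g x := by
  have hLeibniz := iteratedDeriv_fun_mul hD hg
  simp only [hDg, iteratedDeriv_const, Nat.add_one_ne_zero, if_false] at hLeibniz
  rw [sum_range_succ'] at hLeibniz
  simp only [Nat.choose_zero_right, Nat.cast_one, one_mul, iteratedDeriv_zero,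
    Nat.add_sub_add_right, Nat.sub_zero] at hLeibniz
  linear_combination -hLeibniz

theorem sum_range_one_div_two_pow_succ_le_one (n : ℕ) :
    ∑ k ∈ range n, (1 / 2 : ℝ) ^ (k + 1) ≤ 1 := by
  have := sum_geometric_two_le n
  simp only [pow_succ, ← sum_mul]
  linarith

theorem abs_iteratedDeriv_const_div_le {D : ℝ → ℝ} {a : ℝ} (hD : ContDiff ℝ ∞ D)
    (hD_pos : ∀ x, 0 < D x)
    (hD_deriv : ∀ k x, |iteratedDeriv (k + 1) D x| ≤ 2 ^ k * a ^ (k + 1) * D x)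
    (c : ℝ) (n : ℕ) (x : ℝ) :
    |iteratedDeriv n (fun x => c / D x) x| ≤ 4 ^ n * (n ! : ℝ) ^ 2 * a ^ n * |c / D x| := by
  set g := fun x => c / D x
  have hg : ContDiff ℝ ∞ g := contDiff_const.div hD fun x => (hD_pos x).ne'
  have ha : 0 ≤ a := by
    have := (abs_nonneg _).trans (hD_deriv 0 x)
    rw [pow_zero, one_mul, pow_one] at this
    exact nonneg_of_mul_nonneg_left this (hD_pos x)
  induction n using Nat.strong_induction_on generalizing x with
  | _ n ih =>
  rcases n with _ | m
  · simp [g]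
  have hDx := hD_pos x
  have hsum : D x * |iteratedDeriv (m + 1) g x| ≤ ∑ k ∈ range (m + 1),
      (m + 1).choose (k + 1) * (2 ^ k * a ^ (k + 1) * D x)
        * (4 ^ (m - k) * ((m - k)! : ℝ) ^ 2 * a ^ (m - k) * |g x|) := by
    have hsmooth : ((m : ℕ) : WithTop ℕ∞) + 1 ≤ ∞ := by exact_mod_cast le_top
    rw [← abs_of_pos hDx, ← abs_mul, mul_iteratedDeriv_succ_of_mul_eq_const
      (hD.contDiffAt.of_le hsmooth) (hg.contDiffAt.of_le hsmooth)
      (fun y => mul_div_cancel₀ c (hD_pos y).ne'), abs_neg]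
    refine (abs_sum_le_sum_abs _ _).trans (sum_le_sum fun k hk => ?_)
    rw [abs_mul, abs_mul, Nat.abs_cast, abs_of_pos hDx]
    gcongr
    · exact hD_deriv k x
    · exact ih (m - k) (by omega) x
  have hterm : ∀ k ∈ range (m + 1),
      (m + 1).choose (k + 1) * (2 ^ k * a ^ (k + 1) * D x)
        * (4 ^ (m - k) * ((m - k)! : ℝ) ^ 2 * a ^ (m - k) * |g x|)
      ≤ (1 / 2) ^ (k + 1) * (4 ^ (m + 1) * ((m + 1)! : ℝ) ^ 2 * a ^ (m + 1) * |g x|) * D x := by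
    intro k hk
    have := choose_mul_four_pow_mul_factorial_sq_le ha (Nat.lt_succ_iff.mp (mem_range.mp hk))
    calc _ = (m + 1).choose (k + 1) * (2 ^ k * a ^ (k + 1))
            * (4 ^ (m - k) * ((m - k)! : ℝ) ^ 2 * a ^ (m - k)) * (|g x| * D x) := by ring
      _ ≤ (1 / 2) ^ (k + 1) * (4 ^ (m + 1) * ((m + 1)! : ℝ) ^ 2 * a ^ (m + 1))
            * (|g x| * D x) := by gcongr
      _ = _ := by ring
  have hgeom := sum_range_one_div_two_pow_succ_le_one (m + 1)
  refine le_of_mul_le_mul_left ?_ hDx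
  calc D x * |iteratedDeriv (m + 1) g x|
      ≤ ∑ k ∈ range (m + 1), (1 / 2) ^ (k + 1)
          * (4 ^ (m + 1) * ((m + 1)! : ℝ) ^ 2 * a ^ (m + 1) * |g x|) * D x :=
        hsum.trans (sum_le_sum hterm)
    _ ≤ 1 * (4 ^ (m + 1) * ((m + 1)! : ℝ) ^ 2 * a ^ (m + 1) * |g x|) * D x := by
        rw [← sum_mul, ← sum_mul]; gcongr
    _ = _ := by ring

theorem sin_sq_add_mul_cos_sq (b θ : ℝ) :
    sin θ ^ 2 + b * cos θ ^ 2 = (1 + b) / 2 + (b - 1) / 2 * cos (2 * θ) := by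
  rw [cos_two_mul, sin_sq]; ring

theorem iteratedDeriv_succ_sin_sq_add_mul_cos_sq (b : ℝ) (k : ℕ) (θ : ℝ) :
    iteratedDeriv (k + 1) (fun θ => sin θ ^ 2 + b * cos θ ^ 2) θ
      = (b - 1) * 2 ^ k * iteratedDeriv (k + 1) cos (2 * θ) := by
  simp only [sin_sq_add_mul_cos_sq]
  rw [iteratedDeriv_const_add k.succ_pos, iteratedDeriv_const_mul_field,
    iteratedDeriv_comp_const_mul contDiff_cos, Nat.succ_eq_add_one, pow_succ]
  ring

theorem one_le_sin_sq_add_mul_cos_sq {b : ℝ} (hb : 1 ≤ b) (θ : ℝ) :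
    1 ≤ sin θ ^ 2 + b * cos θ ^ 2 := by
  nlinarith [sin_sq_add_cos_sq θ, sq_nonneg (cos θ)]

theorem abs_iteratedDeriv_succ_sin_sq_add_mul_cos_sq_le {lam : ℝ} (hlam : 1 ≤ lam) (k : ℕ)
    (θ : ℝ) :
    |iteratedDeriv (k + 1) (fun θ => sin θ ^ 2 + lam ^ 4 * cos θ ^ 2) θ|
      ≤ 2 ^ k * (lam ^ 2) ^ (k + 1) * (sin θ ^ 2 + lam ^ 4 * cos θ ^ 2) := by
  have hlam4 : 1 ≤ lam ^ 4 := one_le_pow₀ hlam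
  rw [iteratedDeriv_succ_sin_sq_add_mul_cos_sq, abs_mul, abs_mul, abs_of_nonneg (by linarith),
    abs_of_pos (by positivity)]
  rcases k with _ | k
  · -- `λ⁴ - 1 ≤ λ²` is false, so here `D ≥ 1` is not enough and AM-GM is needed
    have hamgm : 2 * lam ^ 2 * |sin θ * cos θ| ≤ sin θ ^ 2 + lam ^ 4 * cos θ ^ 2 := by
      rw [abs_mul]
      nlinarith [sq_nonneg (|sin θ| - lam ^ 2 * |cos θ|), sq_abs (sin θ), sq_abs (cos θ)]
    simp only [zero_add, iteratedDeriv_one, deriv_cos', abs_neg, sin_two_mul, pow_zero, one_mul,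
      mul_one, pow_one]
    rw [mul_assoc, abs_mul, abs_two]
    nlinarith [abs_nonneg (sin θ * cos θ)]
  · have hpow : lam ^ 4 ≤ (lam ^ 2) ^ (k + 2) := by
      rw [← pow_mul]; exact pow_le_pow_right₀ hlam (by omega)
    calc (lam ^ 4 - 1) * 2 ^ (k + 1) * |iteratedDeriv (k + 1 + 1) cos (2 * θ)|
        ≤ lam ^ 4 * 2 ^ (k + 1) * 1 := by
          gcongr
          · linarith
          · exact abs_iteratedDeriv_cos_le_one _ _
      _ = 2 ^ (k + 1) * lam ^ 4 * 1 := by ring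
      _ ≤ 2 ^ (k + 1) * (lam ^ 2) ^ (k + 1 + 1) * (sin θ ^ 2 + lam ^ 4 * cos θ ^ 2) := by
          gcongr
          exact one_le_sin_sq_add_mul_cos_sq hlam4 θ

theorem stmt6_general (lam : ℝ) (hlam : 1 < lam) (i : ℕ) (θ : ℝ) :
    |iteratedDeriv i (f lam) θ| ≤
      4 ^ i * (Nat.factorial i : ℝ) ^ 2 * lam ^ (2 * i) * |f lam θ| := by
  have hlam4 : 1 ≤ lam ^ 4 := one_le_pow₀ hlam.le
  have hbound := abs_iteratedDeriv_const_div_le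
    ((contDiff_sin.pow 2).add (contDiff_const.mul (contDiff_cos.pow 2)))
    (fun θ => one_pos.trans_le (one_le_sin_sq_add_mul_cos_sq hlam4 θ))
    (abs_iteratedDeriv_succ_sin_sq_add_mul_cos_sq_le hlam.le) (lam ^ 2) i θ
  rwa [← pow_mul] at hbound

/-- For `λ > 1` and every `i ≥ 1`, the `i`-th derivative in `θ` of
`f(λ, θ) = λ²/(sin²θ + λ⁴cos²θ)` satisfies
`|∂_θ^i f| ≤ 4^i · (i!)² · λ^{2i} · |f(λ,θ)|`. -/
theorem stmt6 (lam : ℝ) (hlam : 1 < lam) (i : ℕ) (hi : 1 ≤ i) (θ : ℝ) :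
    |iteratedDeriv i (f lam) θ| ≤
      4 ^ i * (Nat.factorial i : ℝ) ^ 2 * lam ^ (2 * i) * |f lam θ| :=
  stmt6_general lam hlam i θ
end

section
/- Let ψ be the flat function ψ(x) = e^{-1/x²} for x > 0, ψ(x) = 0 for x ≤ 0. Then for every r ≥ 1 and every x ∈ ℝ, |ψ^{(r)}(x)| ≤ (2r)^{6r}. -/
/-!
On `(0, ∞)` every derivative of `ψ` has the form `ψ⁽ⁿ⁾(x) = Pₙ(1/x) e^{-1/x²}` for a polynomial `Pₙ`
of degree at most `3n` whose coefficients are at most `(3n+1)ⁿ` in absolute value, so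
`|ψ⁽ⁿ⁾(x)| ≤ (3n+1)ⁿ⁺¹ max(1, 1/x)³ⁿ e^{-1/x²}`; the Taylor bound `e^{y²} ≥ y⁴ⁿ/(2n)!` caps the last
two factors by `(2n)!`. On `(-∞, 0]` all derivatives vanish, since `ψ` vanishes there.
-/

noncomputable def psi (x : ℝ) : ℝ := if 0 < x then Real.exp (-1 / x ^ 2) else 0

open Polynomial Filter Set Topology Real
open scoped Nat

section Polynomial

variable {p : ℝ[X]} {d : ℕ} {A : ℝ}

lemma abs_coeff_derivative_le (hdeg : p.natDegree ≤ d) (hA : ∀ i, |p.coeff i| ≤ A) (i : ℕ) :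
    |(derivative p).coeff i| ≤ d * A := by
  rw [coeff_derivative, abs_mul]
  by_cases hi : i + 1 ≤ d
  · have hcast : |(i : ℝ) + 1| ≤ d := by
      rw [abs_of_nonneg (by positivity)]
      exact_mod_cast hi
    calc |p.coeff (i + 1)| * |(i : ℝ) + 1| ≤ A * d :=
          mul_le_mul (hA _) hcast (abs_nonneg _) ((abs_nonneg _).trans (hA 0))
      _ = d * A := mul_comm _ _
  · rw [coeff_eq_zero_of_natDegree_lt (by omega), abs_zero, zero_mul]
    exact mul_nonneg (Nat.cast_nonneg _) ((abs_nonneg _).trans (hA 0))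

lemma abs_coeff_mul_X_pow_le (hA : ∀ i, |p.coeff i| ≤ A) (k i : ℕ) :
    |(p * X ^ k).coeff i| ≤ A := by
  rw [coeff_mul_X_pow']
  split_ifs
  · exact hA _
  · simpa using (abs_nonneg _).trans (hA 0)

lemma abs_eval_le_of_abs_coeff_le (hdeg : p.natDegree ≤ d) (hA : ∀ i, |p.coeff i| ≤ A) (y : ℝ) :
    |p.eval y| ≤ (d + 1) * A * max 1 |y| ^ d := by
  rw [eval_eq_sum_range' (Nat.lt_succ_of_le hdeg)]
  calc |∑ i ∈ Finset.range (d + 1), p.coeff i * y ^ i|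
      ≤ ∑ i ∈ Finset.range (d + 1), |p.coeff i * y ^ i| := Finset.abs_sum_le_sum_abs _ _
    _ ≤ ∑ _i ∈ Finset.range (d + 1), A * max 1 |y| ^ d := by
        refine Finset.sum_le_sum fun i hi => ?_
        rw [abs_mul, abs_pow]
        refine mul_le_mul (hA i) ?_ (by positivity) ((abs_nonneg _).trans (hA 0))
        exact (pow_le_pow_left₀ (abs_nonneg y) (le_max_right 1 |y|) i).trans
          (pow_le_pow_right₀ (le_max_left 1 |y|) (Finset.mem_range_succ_iff.mp hi))
    _ = (d + 1) * A * max 1 |y| ^ d := by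
        rw [Finset.sum_const, Finset.card_range, nsmul_eq_mul]
        push_cast
        ring

end Polynomial

/-- `ψ⁽ⁿ⁾(x) = flatPoly n (1/x) · e^{-1/x²}` for `x > 0`; differentiating this identity gives the
recursion. -/
noncomputable def flatPoly : ℕ → ℝ[X]
  | 0 => 1
  | n + 1 => -derivative (flatPoly n) * X ^ 2 + 2 * flatPoly n * X ^ 3

lemma natDegree_flatPoly_le (n : ℕ) : (flatPoly n).natDegree ≤ 3 * n := by
  induction n with
  | zero => simp [flatPoly]
  | succ n ih =>
    have hder : (-derivative (flatPoly n)).natDegree ≤ 3 * n :=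
      (natDegree_neg _).trans_le ((natDegree_derivative_le _).trans (by omega))
    have htwo : (2 * flatPoly n).natDegree ≤ 0 + 3 * n :=
      natDegree_mul_le_of_le (by simp) ih
    rw [flatPoly]
    refine (natDegree_add_le _ _).trans (max_le ?_ ?_)
    · exact (natDegree_mul_le_of_le hder (natDegree_X_pow_le 2)).trans (by omega)
    · exact (natDegree_mul_le_of_le htwo (natDegree_X_pow_le 3)).trans (by omega)

lemma abs_coeff_flatPoly_le (n i : ℕ) : |(flatPoly n).coeff i| ≤ (3 * n + 1 : ℝ) ^ n := by
  induction n generalizing i with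
  | zero => rcases eq_or_ne i 0 with rfl | h <;> simp [flatPoly, coeff_one, *]
  | succ n ih =>
    have hder := abs_coeff_derivative_le (natDegree_flatPoly_le n) ih
    have hmul : ∀ j, |(2 * flatPoly n).coeff j| ≤ 2 * (3 * n + 1 : ℝ) ^ n := fun j => by
      rw [coeff_ofNat_mul, abs_mul, abs_two]
      exact mul_le_mul_of_nonneg_left (ih j) zero_le_two
    have hneg : ∀ j, |(-derivative (flatPoly n)).coeff j| ≤ ((3 * n : ℕ) : ℝ) * (3 * n + 1) ^ n :=
      fun j => by rw [coeff_neg, abs_neg]; exact hder j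
    rw [flatPoly, coeff_add]
    calc _ ≤ ((3 * n : ℕ) : ℝ) * (3 * n + 1) ^ n + 2 * (3 * n + 1 : ℝ) ^ n :=
          (abs_add_le _ _).trans
            (add_le_add (abs_coeff_mul_X_pow_le hneg 2 i) (abs_coeff_mul_X_pow_le hmul 3 i))
      _ = (3 * n + 2) * (3 * n + 1 : ℝ) ^ n := by push_cast; ring
      _ ≤ (3 * (n + 1 : ℕ) + 1 : ℝ) ^ (n + 1) := by
        rw [pow_succ']
        push_cast
        gcongr ?_ * ?_ ^ _ <;> linarith

lemma abs_eval_flatPoly_le (n : ℕ) (y : ℝ) :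
    |(flatPoly n).eval y| ≤ (3 * n + 1 : ℝ) ^ (n + 1) * max 1 |y| ^ (3 * n) := by
  have h := abs_eval_le_of_abs_coeff_le (natDegree_flatPoly_le n) (abs_coeff_flatPoly_le n) y
  rw [pow_succ']
  push_cast at h
  linarith

lemma pow_mul_exp_neg_le_factorial {x : ℝ} (hx : 0 ≤ x) (k : ℕ) :
    x ^ k * exp (-x) ≤ k ! := by
  rw [exp_neg, ← div_eq_mul_inv, div_le_iff₀ (exp_pos x)]
  exact (div_le_iff₀' (by positivity)).mp (pow_div_factorial_le_exp x hx k)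

lemma max_one_abs_pow_mul_exp_neg_sq_le {m k : ℕ} (hmk : m ≤ 2 * k) (y : ℝ) :
    max 1 |y| ^ m * exp (-y ^ 2) ≤ k ! := by
  rcases le_total |y| 1 with hy | hy
  · rw [max_eq_left hy, one_pow, one_mul]
    calc exp (-y ^ 2) ≤ 1 := exp_le_one_iff.mpr (neg_nonpos.mpr (sq_nonneg y))
      _ ≤ k ! := by exact_mod_cast k.factorial_pos
  · rw [max_eq_right hy]
    calc |y| ^ m * exp (-y ^ 2) ≤ (y ^ 2) ^ k * exp (-y ^ 2) := by
          rw [← sq_abs, ← pow_mul]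
          gcongr
      _ ≤ k ! := pow_mul_exp_neg_le_factorial (sq_nonneg y) k

lemma hasDerivAt_flatPoly_eval_inv_mul_exp (n : ℕ) {x : ℝ} (hx : x ≠ 0) :
    HasDerivAt (fun y => (flatPoly n).eval y⁻¹ * exp (-y⁻¹ ^ 2))
      ((flatPoly (n + 1)).eval x⁻¹ * exp (-x⁻¹ ^ 2)) x := by
  have hinv : HasDerivAt (fun y : ℝ => y⁻¹) (-(x ^ 2)⁻¹) x := hasDerivAt_inv hx
  have hpoly : HasDerivAt (fun y => (flatPoly n).eval y⁻¹)
      ((derivative (flatPoly n)).eval x⁻¹ * -(x ^ 2)⁻¹) x :=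
    ((flatPoly n).hasDerivAt x⁻¹).comp x hinv
  have hexp : HasDerivAt (fun y => exp (-y⁻¹ ^ 2))
      (exp (-x⁻¹ ^ 2) * -((2 : ℕ) * x⁻¹ ^ 1 * -(x ^ 2)⁻¹)) x :=
    ((hinv.pow 2).neg).exp
  refine (hpoly.mul hexp).congr_deriv ?_
  simp only [flatPoly, eval_add, eval_mul, eval_neg, eval_pow, eval_X, eval_ofNat]
  field_simp
  ring

lemma iteratedDeriv_psi_of_pos (n : ℕ) {x : ℝ} (hx : 0 < x) :
    iteratedDeriv n psi x = (flatPoly n).eval x⁻¹ * exp (-x⁻¹ ^ 2) := by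
  induction n generalizing x with
  | zero =>
    simp only [iteratedDeriv_zero, psi, if_pos hx, flatPoly, eval_one, one_mul, inv_pow, neg_div,
      one_div]
  | succ n ih =>
    have hev : iteratedDeriv n psi =ᶠ[𝓝 x] fun y => (flatPoly n).eval y⁻¹ * exp (-y⁻¹ ^ 2) :=
      eventually_of_mem (Ioi_mem_nhds hx) fun y hy => ih hy
    rw [iteratedDeriv_succ, hev.deriv_eq]
    exact (hasDerivAt_flatPoly_eval_inv_mul_exp n hx.ne').deriv

lemma iteratedDeriv_psi_of_nonpos (n : ℕ) {x : ℝ} (hx : x ≤ 0) : iteratedDeriv n psi x = 0 := by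
  induction n generalizing x with
  | zero => simp [psi, not_lt.mpr hx]
  | succ n ih =>
    rw [iteratedDeriv_succ]
    by_cases hd : DifferentiableAt ℝ (iteratedDeriv n psi) x
    · -- `ψ⁽ⁿ⁾` vanishes on `(-∞, 0]`, so its one-sided derivative there is `0`.
      have hev : iteratedDeriv n psi =ᶠ[𝓝[Iic 0] x] fun _ => 0 :=
        eventually_mem_nhdsWithin.mono fun y hy => ih hy
      rw [← hd.derivWithin ((uniqueDiffOn_Iic 0) x hx), hev.derivWithin_eq (ih hx)]
      simp
    · exact deriv_zero_of_not_differentiableAt hd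

lemma three_mul_add_one_pow_mul_factorial_le (r : ℕ) (hr : 1 ≤ r) :
    (3 * r + 1) ^ (r + 1) * (2 * r)! ≤ (2 * r) ^ (6 * r) := by
  have hbase : 3 * r + 1 ≤ (2 * r) ^ 2 := by nlinarith
  calc (3 * r + 1) ^ (r + 1) * (2 * r)! ≤ ((2 * r) ^ 2) ^ (r + 1) * (2 * r) ^ (2 * r) := by
        gcongr
        exact Nat.factorial_le_pow _
    _ = (2 * r) ^ (4 * r + 2) := by rw [← pow_mul, ← pow_add]; ring_nf
    _ ≤ (2 * r) ^ (6 * r) := Nat.pow_le_pow_right (by omega) (by omega)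

/-- For every `r ≥ 1` and all `x ∈ ℝ`, `|ψ^{(r)}(x)| ≤ (2r)^{6r}`. -/
theorem stmt12 (r : ℕ) (hr : 1 ≤ r) (x : ℝ) :
    |iteratedDeriv r psi x| ≤ ((2 * r : ℕ) : ℝ) ^ (6 * r) := by
  rcases le_or_gt x 0 with hx | hx
  · rw [iteratedDeriv_psi_of_nonpos r hx, abs_zero]
    positivity
  rw [iteratedDeriv_psi_of_pos r hx, abs_mul, abs_of_pos (exp_pos _)]
  calc |(flatPoly r).eval x⁻¹| * exp (-x⁻¹ ^ 2)
      ≤ (3 * r + 1 : ℝ) ^ (r + 1) * (max 1 |x⁻¹| ^ (3 * r) * exp (-x⁻¹ ^ 2)) := by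
        rw [← mul_assoc]
        gcongr
        exact abs_eval_flatPoly_le r x⁻¹
    _ ≤ (3 * r + 1 : ℝ) ^ (r + 1) * (2 * r)! := by
        gcongr
        exact max_one_abs_pow_mul_exp_neg_sq_le (by omega) _
    _ ≤ ((2 * r : ℕ) : ℝ) ^ (6 * r) := by exact_mod_cast three_mul_add_one_pow_mul_factorial_le r hr
end

section
/- Fix 0 < a < 1/10 and c ∈ ℝ, and let φ₀(x) = sgn(x - c)·exp(-1/|x-c|^a) for x ≠ c, φ₀(c) = 0. Then for every integer n with q := q_n ≥ some threshold depending on a, every r with 0 ≤ r ≤ ⌊q^a⌋, and every x with |x - c| ≤ 1/q², it holds that |φ₀^{(r)}(x)| ≤ exp(-q^{2a}/4). -/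
/-- The flat function `φ₀(x) = sgn(x-c)·e^{-1/|x-c|^a}` (with `φ₀(c) = 0`). -/
noncomputable def phi0 (a c : ℝ) (x : ℝ) : ℝ :=
  Real.sign (x - c) * Real.exp (-1 / |x - c| ^ a)

/-!
On `x > 0` every derivative of `φ₀` (centred at `0`) is a combination
`φ₀⁽ʳ⁾(x) = ∑ₖ c_{r,k} x^{-(r+ka)} e^{-x^{-a}}` whose coefficients have total mass at most
`(1+a)^r r!`; since `φ₀` is odd and flat at `0` this controls `φ₀⁽ʳ⁾` everywhere. In the variable
`s = |x|^{-a}` the bound reads `C_r s^m e^{-s} ≤ C_r (2m)^m e^{-s/2}` with `m = (1+a)r/a`. For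
`|x| ≤ q^{-2}` we have `s ≥ q^{2a}`, and for `r ≤ q^a` the constant is `e^{O(q^a log q)}`, which is
eventually below `e^{q^{2a}/4}`.
-/

open Real Filter Topology Finset
open scoped Nat

noncomputable def flatTerm (a e x : ℝ) : ℝ := x ^ (-e) * exp (-x ^ (-a))

lemma flatTerm_pos (a e : ℝ) {x : ℝ} (hx : 0 < x) : 0 < flatTerm a e x :=
  mul_pos (rpow_pos_of_pos hx _) (exp_pos _)

lemma flatTerm_le_flatTerm (a : ℝ) {e e' x : ℝ} (hx0 : 0 < x) (hx1 : x ≤ 1) (he : e ≤ e') :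
    flatTerm a e x ≤ flatTerm a e' x :=
  mul_le_mul_of_nonneg_right (rpow_le_rpow_of_exponent_ge hx0 hx1 (neg_le_neg he)) (exp_pos _).le

lemma flatTerm_add_one (a e : ℝ) {x : ℝ} (hx : 0 < x) :
    flatTerm a (e + 1) x = flatTerm a e x / x := by
  rw [flatTerm, flatTerm, neg_add, rpow_add hx, rpow_neg_one]
  ring

lemma flatTerm_eq_rpow_mul_exp {a : ℝ} (ha : a ≠ 0) (e : ℝ) {x : ℝ} (hx : 0 < x) :
    flatTerm a e x = (x ^ (-a)) ^ (e / a) * exp (-x ^ (-a)) := by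
  rw [flatTerm, ← rpow_mul hx.le]
  congr 2
  field_simp

lemma hasDerivAt_flatTerm (a e : ℝ) {x : ℝ} (hx : 0 < x) :
    HasDerivAt (flatTerm a e) (a * flatTerm a (e + 1 + a) x - e * flatTerm a (e + 1) x) x := by
  have h₁ : HasDerivAt (fun y : ℝ => y ^ (-e)) (-e * x ^ (-e - 1)) x :=
    hasDerivAt_rpow_const (Or.inl hx.ne')
  have h₂ := (hasDerivAt_rpow_const (p := -a) (Or.inl hx.ne')).fun_neg.exp
  refine (h₁.mul h₂).congr_deriv ?_
  rw [flatTerm, flatTerm, show -(e + 1 + a) = -e + (-a - 1) by ring,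
    show -(e + 1) = -e - 1 by ring, rpow_add hx]
  ring

lemma tendsto_flatTerm_nhdsGT_zero {a : ℝ} (ha : 0 < a) (e : ℝ) :
    Tendsto (flatTerm a e) (𝓝[>] 0) (𝓝 0) := by
  have h := (tendsto_rpow_mul_exp_neg_mul_atTop_nhds_zero (e / a) 1 one_pos).comp
    (tendsto_rpow_neg_nhdsGT_zero (neg_lt_zero.2 ha))
  refine h.congr' (eventually_nhdsWithin_of_forall fun x hx => ?_)
  simp [flatTerm_eq_rpow_mul_exp ha.ne' e hx]

lemma rpow_mul_exp_neg_le {s m : ℝ} (hs : 0 < s) (hm : 0 ≤ m) :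
    s ^ m * exp (-s) ≤ (2 * m) ^ m * exp (-(s / 2)) := by
  rcases hm.eq_or_lt with rfl | hm
  · simp [hs.le]
  have h : (s / (2 * m)) ^ m ≤ exp (s / 2) := by
    calc (s / (2 * m)) ^ m ≤ exp (s / (2 * m)) ^ m := by
          gcongr
          linarith [add_one_le_exp (s / (2 * m))]
      _ = exp (s / 2) := by
          rw [← exp_mul]
          field_simp
  calc s ^ m * exp (-s) = (2 * m) ^ m * (s / (2 * m)) ^ m * exp (-s) := by
        rw [← mul_rpow (by positivity) (by positivity), mul_div_cancel₀ _ (by positivity)]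
    _ ≤ (2 * m) ^ m * exp (s / 2) * exp (-s) := by gcongr
    _ = (2 * m) ^ m * exp (-(s / 2)) := by
        rw [mul_assoc, ← exp_add]
        ring_nf

lemma flatTerm_le {a e x : ℝ} (ha : 0 < a) (he : 0 ≤ e) (hx : 0 < x) :
    flatTerm a e x ≤ (2 * (e / a)) ^ (e / a) * exp (-(x ^ (-a) / 2)) := by
  rw [flatTerm_eq_rpow_mul_exp ha.ne' e hx]
  exact rpow_mul_exp_neg_le (rpow_pos_of_pos hx _) (div_nonneg he ha.le)

/-- `flatCoeff a r k` is the coefficient of `flatTerm a (r + k * a)` in `φ₀⁽ʳ⁾` on `x > 0`. -/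
def flatCoeff (a : ℝ) : ℕ → ℕ → ℝ
  | 0, 0 => 1
  | 0, _ + 1 => 0
  | r + 1, 0 => -r * flatCoeff a r 0
  | r + 1, k + 1 => a * flatCoeff a r k - (r + (k + 1 : ℕ) * a) * flatCoeff a r (k + 1)

lemma flatCoeff_of_lt {a : ℝ} {r k : ℕ} (h : r < k) : flatCoeff a r k = 0 := by
  induction r generalizing k with
  | zero => obtain ⟨k, rfl⟩ := Nat.exists_eq_succ_of_ne_zero h.ne'; rfl
  | succ r ih =>
    obtain ⟨k, rfl⟩ := Nat.exists_eq_succ_of_ne_zero (by omega : k ≠ 0)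
    simp [flatCoeff, ih (by omega : r < k), ih (by omega : r < k + 1)]

lemma sum_flatCoeff_succ_mul (a : ℝ) (r : ℕ) (f : ℕ → ℝ) :
    ∑ k ∈ range (r + 2), flatCoeff a (r + 1) k * f k =
      ∑ k ∈ range (r + 1), flatCoeff a r k * (a * f (k + 1) - (r + k * a) * f k) := by
  set g : ℕ → ℝ := fun k => flatCoeff a r k * ((r + k * a) * f k)
  have hg : ∑ k ∈ range (r + 1), g k = ∑ k ∈ range (r + 1), g (k + 1) + g 0 := by
    rw [← sum_range_succ' g (r + 1), sum_range_succ g (r + 1)]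
    simp [g, flatCoeff_of_lt (lt_add_one r)]
  calc ∑ k ∈ range (r + 2), flatCoeff a (r + 1) k * f k
      = ∑ k ∈ range (r + 1), (a * flatCoeff a r k * f (k + 1) - g (k + 1)) + -g 0 := by
        rw [sum_range_succ']
        congr 1
        · refine sum_congr rfl fun k _ => ?_
          simp only [flatCoeff, g]
          ring
        · simp only [flatCoeff, g]
          push_cast
          ring
    _ = ∑ k ∈ range (r + 1), (a * flatCoeff a r k * f (k + 1) - g k) := by
        rw [sum_sub_distrib, sum_sub_distrib, hg]
        ring
    _ = ∑ k ∈ range (r + 1), flatCoeff a r k * (a * f (k + 1) - (r + k * a) * f k) :=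
        sum_congr rfl fun k _ => by ring

lemma sum_abs_flatCoeff_le {a : ℝ} (ha : 0 ≤ a) (r : ℕ) :
    ∑ k ∈ range (r + 1), |flatCoeff a r k| ≤ (1 + a) ^ r * r ! := by
  induction r with
  | zero => simp [flatCoeff]
  | succ r ih =>
    -- pairing with the signs `σ` of the new coefficients turns the mass into a linear expression
    set σ : ℕ → ℝ := fun k => SignType.sign (flatCoeff a (r + 1) k)
    have hσ (k : ℕ) : |σ k| ≤ 1 := by
      simp only [σ]
      generalize SignType.sign (flatCoeff a (r + 1) k) = s
      cases s <;> simp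
    calc ∑ k ∈ range (r + 1 + 1), |flatCoeff a (r + 1) k|
        = ∑ k ∈ range (r + 1), flatCoeff a r k * (a * σ (k + 1) - (r + k * a) * σ k) := by
          simp only [← sum_flatCoeff_succ_mul a r σ, σ, self_mul_sign]
      _ ≤ ∑ k ∈ range (r + 1), |flatCoeff a r k| * ((1 + a) * (r + 1)) := by
          refine sum_le_sum fun k hk => (le_abs_self _).trans ?_
          have hk : (k : ℝ) ≤ r := by exact_mod_cast Nat.lt_succ_iff.mp (mem_range.mp hk)
          rw [abs_mul]
          gcongr
          calc |a * σ (k + 1) - (r + k * a) * σ k| ≤ a * 1 + (r + k * a) * 1 := by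
                refine (abs_sub _ _).trans (add_le_add ?_ ?_) <;>
                  rw [abs_mul, abs_of_nonneg (by positivity)] <;> gcongr <;> apply hσ
            _ ≤ (1 + a) * (r + 1) := by nlinarith
      _ ≤ (1 + a) ^ (r + 1) * (r + 1)! := by
          rw [← sum_mul, Nat.factorial_succ]
          push_cast
          calc _ ≤ (1 + a) ^ r * r ! * ((1 + a) * (r + 1)) := by gcongr
            _ = _ := by ring

noncomputable def flatDeriv (a : ℝ) (r : ℕ) (x : ℝ) : ℝ :=
  ∑ k ∈ range (r + 1), flatCoeff a r k * flatTerm a (r + k * a) x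

lemma hasDerivAt_flatDeriv (a : ℝ) (r : ℕ) {x : ℝ} (hx : 0 < x) :
    HasDerivAt (flatDeriv a r) (flatDeriv a (r + 1) x) x := by
  refine (HasDerivAt.fun_sum fun (k : ℕ) _ =>
    (hasDerivAt_flatTerm a (r + k * a) hx).const_mul (flatCoeff a r k)).congr_deriv ?_
  rw [flatDeriv, sum_flatCoeff_succ_mul]
  refine sum_congr rfl fun k _ => ?_
  push_cast
  ring_nf

lemma abs_flatDeriv_le {a : ℝ} (ha : 0 ≤ a) (r : ℕ) {x : ℝ} (hx0 : 0 < x) (hx1 : x ≤ 1) :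
    |flatDeriv a r x| ≤ (1 + a) ^ r * r ! * flatTerm a ((1 + a) * r) x := by
  calc |flatDeriv a r x|
      ≤ ∑ k ∈ range (r + 1), |flatCoeff a r k| * flatTerm a ((1 + a) * r) x := by
        refine (abs_sum_le_sum_abs _ _).trans (sum_le_sum fun k hk => ?_)
        have hk : (k : ℝ) ≤ r := by exact_mod_cast Nat.lt_succ_iff.mp (mem_range.mp hk)
        rw [abs_mul, abs_of_pos (flatTerm_pos a _ hx0)]
        gcongr
        exact flatTerm_le_flatTerm a hx0 hx1 (by nlinarith)
    _ ≤ (1 + a) ^ r * r ! * flatTerm a ((1 + a) * r) x := by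
        rw [← sum_mul]
        gcongr
        · exact (flatTerm_pos a _ hx0).le
        · exact sum_abs_flatCoeff_le ha r

lemma iteratedDeriv_phi0_eq_sub (a c : ℝ) (r : ℕ) (x : ℝ) :
    iteratedDeriv r (phi0 a c) x = iteratedDeriv r (phi0 a 0) (x - c) := by
  have h : phi0 a c = fun y => phi0 a 0 (y - c) := by
    funext y
    simp [phi0]
  rw [h, iteratedDeriv_comp_sub_const]

lemma iteratedDeriv_phi0_of_pos (a : ℝ) (r : ℕ) {x : ℝ} (hx : 0 < x) :
    iteratedDeriv r (phi0 a 0) x = flatDeriv a r x := by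
  induction r generalizing x with
  | zero =>
    simp [phi0, flatDeriv, flatCoeff, flatTerm, sign_of_pos hx, abs_of_pos hx, rpow_neg hx.le,
      neg_div]
  | succ r ih =>
    have h : iteratedDeriv r (phi0 a 0) =ᶠ[𝓝 x] flatDeriv a r :=
      eventually_of_mem (Ioi_mem_nhds hx) fun y hy => ih hy
    rw [iteratedDeriv_succ, h.deriv_eq, (hasDerivAt_flatDeriv a r hx).deriv]

lemma abs_iteratedDeriv_phi0_neg (a : ℝ) (r : ℕ) (x : ℝ) :
    |iteratedDeriv r (phi0 a 0) (-x)| = |iteratedDeriv r (phi0 a 0) x| := by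
  have hodd : (fun y => phi0 a 0 (-y)) = fun y => -phi0 a 0 y := by
    funext y
    simp [phi0, sign_neg]
  have h := iteratedDeriv_comp_neg r (phi0 a 0) x
  rw [hodd, iteratedDeriv_fun_neg] at h
  rw [← abs_neg (iteratedDeriv r _ x), h, smul_eq_mul, abs_mul, abs_pow, abs_neg, abs_one, one_pow,
    one_mul]

lemma abs_iteratedDeriv_phi0_le {a : ℝ} (ha : 0 ≤ a) (r : ℕ) {x : ℝ} (hx0 : x ≠ 0)
    (hx1 : |x| ≤ 1) :
    |iteratedDeriv r (phi0 a 0) x| ≤ (1 + a) ^ r * r ! * flatTerm a ((1 + a) * r) |x| := by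
  have hx : |iteratedDeriv r (phi0 a 0) x| = |flatDeriv a r (|x|)| := by
    rcases hx0.lt_or_gt with hx | hx
    · rw [← abs_iteratedDeriv_phi0_neg, abs_of_neg hx, iteratedDeriv_phi0_of_pos a r (neg_pos.2 hx)]
    · rw [abs_of_pos hx, iteratedDeriv_phi0_of_pos a r hx]
  exact hx ▸ abs_flatDeriv_le ha r (abs_pos.2 hx0) hx1

lemma iteratedDeriv_phi0_zero {a : ℝ} (ha : 0 < a) (r : ℕ) :
    iteratedDeriv r (phi0 a 0) 0 = 0 := by
  induction r with
  | zero => simp [phi0]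
  | succ r ih =>
    rw [iteratedDeriv_succ]
    refine HasDerivAt.deriv (hasDerivAt_iff_tendsto_slope.2 ?_)
    have hlim := ((tendsto_flatTerm_nhdsGT_zero ha ((1 + a) * r + 1)).const_mul
      ((1 + a) ^ r * r !)).comp tendsto_abs_nhdsNE_zero
    rw [mul_zero] at hlim
    refine squeeze_zero_norm' ?_ hlim
    filter_upwards [nhdsWithin_le_nhds (Icc_mem_nhds neg_one_lt_zero one_pos),
      self_mem_nhdsWithin] with y hy1 hy0
    have hy : 0 < |y| := abs_pos.2 hy0
    rw [slope_def_field, ih, sub_zero, sub_zero, norm_div, Real.norm_eq_abs, Real.norm_eq_abs,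
      Function.comp_apply, flatTerm_add_one a _ hy, ← mul_div_assoc]
    gcongr
    exact abs_iteratedDeriv_phi0_le ha.le r hy0 (abs_le.2 hy1)

lemma eventually_log_mul_le {κ c : ℝ} (hκ : 0 < κ) (hc : 0 < c) :
    ∀ᶠ u in atTop, log (κ * u) ≤ c * u := by
  filter_upwards [(isLittleO_log_id_atTop.comp_tendsto (tendsto_id.const_mul_atTop hκ)).bound
    (div_pos hc hκ), eventually_ge_atTop 0] with u hu hu0
  simp only [Function.comp_apply, id, norm_eq_abs, abs_of_nonneg (mul_nonneg hκ.le hu0)] at hu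
  calc log (κ * u) ≤ c / κ * (κ * u) := (le_abs_self _).trans hu
    _ = c * u := by field_simp

lemma sq_rpow_le_rpow_neg {a q t : ℝ} (hq : 0 < q) (ht : 0 < t) (htq : t ≤ 1 / q ^ 2)
    (ha : 0 ≤ a) : (q ^ a) ^ 2 ≤ t ^ (-a) :=
  calc (q ^ a) ^ 2 = (1 / q ^ 2) ^ (-a) := by
        rw [one_div, inv_rpow (by positivity), rpow_neg (by positivity), inv_inv,
          ← rpow_natCast, ← rpow_natCast, ← rpow_mul hq.le, ← rpow_mul hq.le, mul_comm]
    _ ≤ t ^ (-a) := rpow_le_rpow_of_nonpos ht htq (neg_nonpos.2 ha)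

noncomputable def flatConst (a : ℝ) (r : ℕ) : ℝ :=
  (1 + a) ^ r * r ! * (2 * ((1 + a) * r / a)) ^ ((1 + a) * r / a)

lemma abs_iteratedDeriv_phi0_le_flatConst {a : ℝ} (ha : 0 < a) (r : ℕ) {x : ℝ} (hx0 : x ≠ 0)
    (hx1 : |x| ≤ 1) :
    |iteratedDeriv r (phi0 a 0) x| ≤ flatConst a r * exp (-(|x| ^ (-a) / 2)) := by
  rw [flatConst, mul_assoc _ (_ ^ _)]
  refine (abs_iteratedDeriv_phi0_le ha.le r hx0 hx1).trans ?_
  gcongr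
  exact flatTerm_le ha (by positivity) (abs_pos.2 hx0)

lemma eventually_flatConst_le {a : ℝ} (ha : 0 < a) :
    ∀ᶠ u in atTop, ∀ r : ℕ, (r : ℝ) ≤ u → flatConst a r ≤ exp (u ^ 2 / 4) := by
  -- `κ * u` bounds both bases `(1 + a) * r` and `2 * (1 + a) * r / a`; `l * r` is the total exponent
  set κ := (1 + a) + 2 * (1 + a) / a
  set l := 1 + (1 + a) / a
  have hκ : 1 ≤ κ := by
    have : 0 ≤ 2 * (1 + a) / a := by positivity
    linarith
  have hl : 0 < l := by positivity
  filter_upwards [eventually_log_mul_le (by positivity : 0 < κ) (by positivity : 0 < 1 / (4 * l)),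
    eventually_ge_atTop 1] with u hlog hu r hr
  have hK : 1 ≤ κ * u := one_le_mul_of_one_le_of_one_le hκ hu
  have h₁ : (1 + a) ^ r * r ! ≤ (κ * u) ^ (r : ℝ) := by
    rw [rpow_natCast]
    calc (1 + a) ^ r * r ! ≤ (1 + a) ^ r * r ^ r := by
          gcongr
          exact_mod_cast Nat.factorial_le_pow r
      _ = ((1 + a) * r) ^ r := (mul_pow _ _ _).symm
      _ ≤ (κ * u) ^ r := by
          gcongr
          nlinarith [show 0 ≤ 2 * (1 + a) / a * u by positivity]
  have h₂ : (2 * ((1 + a) * r / a)) ^ ((1 + a) * r / a) ≤ (κ * u) ^ ((1 + a) * r / a) := by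
    refine rpow_le_rpow (by positivity) ?_ (by positivity)
    have : 2 * ((1 + a) * r / a) ≤ 2 * (1 + a) / a * u := by
      rw [show 2 * ((1 + a) * r / a) = 2 * (1 + a) / a * r by ring]
      gcongr
    nlinarith
  calc flatConst a r ≤ (κ * u) ^ (r : ℝ) * (κ * u) ^ ((1 + a) * r / a) := by
        rw [flatConst]
        gcongr
    _ = (κ * u) ^ (l * r) := by
        rw [← rpow_add (by positivity)]
        congr 1
        simp only [l]
        field_simp
    _ ≤ (κ * u) ^ (l * u) := by gcongr
    _ = exp (log (κ * u) * (l * u)) := rpow_def_of_pos (by positivity) _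
    _ ≤ exp (u ^ 2 / 4) := by
        gcongr
        calc log (κ * u) * (l * u) ≤ 1 / (4 * l) * u * (l * u) := by gcongr
          _ = u ^ 2 / 4 := by field_simp

theorem stmt13_general (a c : ℝ) (ha0 : 0 < a) :
    ∃ Q : ℕ, ∀ q : ℕ, Q ≤ q → ∀ r : ℕ, r ≤ ⌊(q : ℝ) ^ a⌋₊ →
      ∀ x : ℝ, |x - c| ≤ 1 / (q : ℝ) ^ 2 →
        |iteratedDeriv r (phi0 a c) x| ≤ Real.exp (-(q : ℝ) ^ (2 * a) / 4) := by
  have hq : Tendsto (fun q : ℕ => (q : ℝ) ^ a) atTop atTop :=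
    (tendsto_rpow_atTop ha0).comp tendsto_natCast_atTop_atTop
  obtain ⟨Q, hQ⟩ := eventually_atTop.1
    ((hq.eventually (eventually_flatConst_le ha0)).and (eventually_ge_atTop 1))
  refine ⟨Q, fun q hqQ r hr x hx => ?_⟩
  obtain ⟨hC, hq1⟩ := hQ q hqQ
  have hq0 : (0 : ℝ) < q := by exact_mod_cast hq1
  have hu : ((q : ℝ) ^ a) ^ 2 = (q : ℝ) ^ (2 * a) := by
    rw [← rpow_natCast, ← rpow_mul hq0.le, mul_comm, Nat.cast_two]
  rw [iteratedDeriv_phi0_eq_sub, ← hu]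
  rcases eq_or_ne x c with rfl | hxc
  · rw [sub_self, iteratedDeriv_phi0_zero ha0, abs_zero]
    positivity
  have hy : x - c ≠ 0 := sub_ne_zero.2 hxc
  have hy1 : |x - c| ≤ 1 :=
    hx.trans (div_le_one_of_le₀ (one_le_pow₀ (by exact_mod_cast hq1)) (by positivity))
  calc |iteratedDeriv r (phi0 a 0) (x - c)| ≤ flatConst a r * exp (-(|x - c| ^ (-a) / 2)) :=
        abs_iteratedDeriv_phi0_le_flatConst ha0 r hy hy1
    _ ≤ exp (((q : ℝ) ^ a) ^ 2 / 4) * exp (-(((q : ℝ) ^ a) ^ 2 / 2)) := by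
        gcongr
        · exact hC r ((Nat.cast_le.2 hr).trans (Nat.floor_le (by positivity)))
        · exact sq_rpow_le_rpow_neg hq0 (abs_pos.2 hy) hx ha0.le
    _ = exp (-((q : ℝ) ^ a) ^ 2 / 4) := by
        rw [← exp_add]
        ring_nf

/-- Fix `0 < a < 1/10` and `c`.  There is a threshold `Q` (depending on `a`) such
that for every integer `q ≥ Q`, every `r ≤ ⌊q^a⌋` and every `x` with
`|x - c| ≤ 1/q²`, one has `|φ₀^{(r)}(x)| ≤ e^{-q^{2a}/4}`. -/
theorem stmt13 (a c : ℝ) (ha0 : 0 < a) (ha1 : a < 1 / 10) :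
    ∃ Q : ℕ, ∀ q : ℕ, Q ≤ q → ∀ r : ℕ, r ≤ ⌊(q : ℝ) ^ a⌋₊ →
      ∀ x : ℝ, |x - c| ≤ 1 / (q : ℝ) ^ 2 →
        |iteratedDeriv r (phi0 a c) x| ≤ Real.exp (-(q : ℝ) ^ (2 * a) / 4) :=
  stmt13_general a c ha0
end
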